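/- arXiv:1106.1233 — 3 statements merged into one kernel-verified Lean document; each statement's English description precedes it below -/
import Mathlib

section
/- In a blindfold game with opacity condition, if for every strategy α of Intruder there exists a strategy β of Defender such that α⌢β is S-opaque, then for every pair of strategies (α, β′) the play α⌢β′ is S-opaque; i.e., the negation of the opacity-violate property implies the opacity-verify property. -/
/-- An imperfect-information game structure `(V, Δ, obs, act, v₀)`. -/
structure GameStruct (V A Γ : Type) where
  trans : V → A → Set V
  trans_ne : ∀ v a, (trans v a).Nonempty
  obs : V → Γ
  act : Γ → Set A
  act_ne : ∀ γ, (act γ).Nonempty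
  init : V

namespace GameStruct

variable {V A Γ : Type} (G : GameStruct V A Γ)

/-- Legality of an infinite play `v₀ a₁ v₁ a₂ v₂ …` given by `pos k = v_k`,
`acts k = a_{k+1}`. -/
def IsPlay (pos : ℕ → V) (acts : ℕ → A) : Prop :=
  pos 0 = G.init ∧
    ∀ n, acts n ∈ G.act (G.obs (pos n)) ∧ pos (n + 1) ∈ G.trans (pos n) (acts n)

/-- Information set of Intruder after `n` rounds:
`I(ρ⁰) = {v₀}`, `I(ρ^{k+1}) = Δ(I(ρ^k), a_{k+1}) ∩ obs⁻¹(obs v_{k+1})`. -/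
def infoSet (pos : ℕ → V) (acts : ℕ → A) : ℕ → Set V
  | 0 => {G.init}
  | n + 1 =>
      {v | (∃ u ∈ infoSet pos acts n, v ∈ G.trans u (acts n)) ∧
            G.obs v = G.obs (pos (n + 1))}

/-- Blindfold: all positions share the same observation. -/
def Blindfold : Prop := ∀ v w : V, G.obs v = G.obs w

/-- `Δ({v₀}, a₁…aₙ)`: positions reachable from the initial position under the
action word. -/
def reach (acts : ℕ → A) : ℕ → Set V
  | 0 => {G.init}
  | n + 1 => {v | ∃ u ∈ reach acts n, v ∈ G.trans u (acts n)}

/-- Observation-based strategy of Intruder: chooses an available action from the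
sequence of observations seen so far (most recent first). -/
structure IStrat where
  f : List Γ → A
  valid : ∀ (h : List Γ) (γ : Γ), f (γ :: h) ∈ G.act γ

/-- Perfect-information strategy of Defender: chooses a legal next position from
the history of positions (most recent first) and the chosen action. -/
structure DStrat where
  g : List V → A → V
  valid : ∀ (h : List V) (v : V) (a : A), g (v :: h) a ∈ G.trans v a

variable [Inhabited V]

/-- History of positions (most recent first) of the play `α ⌢ β`. -/
def hist (α : G.IStrat) (β : G.DStrat) : ℕ → List V
  | 0 => [G.init]
  | n + 1 =>
      (β.g (hist α β n) (α.f ((hist α β n).map G.obs))) :: hist α β n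

/-- `k`-th position of the play `α ⌢ β`. -/
def playPos (α : G.IStrat) (β : G.DStrat) (n : ℕ) : V := (G.hist α β n).headI

/-- `(k+1)`-th action of the play `α ⌢ β`. -/
def playAct (α : G.IStrat) (β : G.DStrat) (n : ℕ) : A :=
  α.f ((G.hist α β n).map G.obs)

/-- Information sets along the play `α ⌢ β`. -/
def playInfo (α : G.IStrat) (β : G.DStrat) : ℕ → Set V :=
  G.infoSet (G.playPos α β) (G.playAct α β)

/-- The play `α ⌢ β` is `S`-opaque: the information set is never included in `S`. -/
def Opaque (S : Set V) (α : G.IStrat) (β : G.DStrat) : Prop :=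
  ∀ k, ¬ G.playInfo α β k ⊆ S

end GameStruct

lemma hist_map_obs {V A Γ : Type} [Inhabited V] (G : GameStruct V A Γ)
    (hb : G.Blindfold) (α : G.IStrat) (β : G.DStrat) (n : ℕ) :
    (G.hist α β n).map G.obs = List.replicate (n + 1) (G.obs G.init) := by
  induction n with
  | zero => simp [GameStruct.hist]
  | succ n ih =>
    simp only [GameStruct.hist, List.map_cons, ih, List.replicate_succ]
    rw [hb _ G.init]

lemma playAct_indep {V A Γ : Type} [Inhabited V] (G : GameStruct V A Γ)
    (hb : G.Blindfold) (α : G.IStrat) (β β' : G.DStrat) (n : ℕ) :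
    G.playAct α β n = G.playAct α β' n := by
  unfold GameStruct.playAct
  rw [hist_map_obs G hb, hist_map_obs G hb]

lemma playInfo_indep {V A Γ : Type} [Inhabited V] (G : GameStruct V A Γ)
    (hb : G.Blindfold) (α : G.IStrat) (β β' : G.DStrat) (k : ℕ) :
    G.playInfo α β k = G.playInfo α β' k := by
  induction k with
  | zero => rfl
  | succ k ih =>
    unfold GameStruct.playInfo GameStruct.infoSet
    ext v
    simp only [Set.mem_setOf_eq]
    constructor
    · rintro ⟨⟨u, hu, hv⟩, -⟩
      refine ⟨⟨u, ?_, ?_⟩, hb _ _⟩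
      · have := ih; unfold GameStruct.playInfo at this; rw [← this]; exact hu
      · rw [← playAct_indep G hb α β β']; exact hv
    · rintro ⟨⟨u, hu, hv⟩, -⟩
      refine ⟨⟨u, ?_, ?_⟩, hb _ _⟩
      · have := ih; unfold GameStruct.playInfo at this; rw [this]; exact hu
      · rw [playAct_indep G hb α β β']; exact hv

/-- In a blindfold game with opacity condition, if for every Intruder strategy
some Defender strategy wins, then every pair of strategies yields an
`S`-opaque play (negation of opacity-violate implies opacity-verify). -/
theorem blindfold_no_violate_implies_verify {V A Γ : Type} [Inhabited V]
    (G : GameStruct V A Γ) (hb : G.Blindfold) (S : Set V)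
    (h : ∀ α : G.IStrat, ∃ β : G.DStrat, G.Opaque S α β) :
    ∀ (α : G.IStrat) (β' : G.DStrat), G.Opaque S α β' := by
  intro α β' k hsub
  obtain ⟨β, hβ⟩ := h α
  exact hβ k (by rwa [playInfo_indep G hb α β β'])
end

section
/- Let 𝒜 = (Q, Σ, Δ, Q₀, Q_f) be a complete NFA and let A_𝒜 be the associated blindfold game with opacity condition (positions Q ∪ {q₀}, Δ′(q₀,a) = Q₀, Δ′(q,a) = Δ(q,a), secrets S = Q ∖ (Q_f ∪ {q₀})). Then 𝒜 is universal (ℒ(𝒜) = Σ*) if and only if every strategy of Defender in A_𝒜 is winning, i.e., for all strategies β of Defender and α of Intruder, the play α⌢β is S-opaque. -/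
/-- A complete nondeterministic finite automaton. -/
structure CNFA (Q A : Type) where
  step : Q → A → Set Q
  start : Set Q
  accept : Set Q
  complete : ∀ q a, (step q a).Nonempty

namespace CNFA

variable {Q A : Type}

/-- `Δ(P, w)`: subset construction, extended to words. -/
def listStep (N : CNFA Q A) (P : Set Q) : List A → Set Q
  | [] => P
  | a :: w => N.listStep {q' | ∃ q ∈ P, q' ∈ N.step q a} w

/-- The blindfold game with opacity condition `A_𝒜` associated with a complete
NFA: positions are `Q ∪ {q₀}` (`none` is the fresh initial position `q₀`),
`Δ'(q₀,a) = Q₀`, `Δ'(q,a) = Δ(q,a)`, a single observation, all actions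
available. -/
def game (N : CNFA Q A) (h0 : N.start.Nonempty) [Nonempty A] :
    GameStruct (Option Q) A Unit where
  trans v a :=
    match v with
    | none => some '' N.start
    | some q => some '' N.step q a
  trans_ne v a := by
    cases v with
    | none => exact h0.image _
    | some q => exact (N.complete q a).image _
  obs _ := ()
  act _ := Set.univ
  act_ne _ := ⟨Classical.arbitrary A, trivial⟩
  init := none

/-- The secret positions `S = Q ∖ (Q_f ∪ {q₀})`. -/
def secrets (N : CNFA Q A) : Set (Option Q) :=
  {v | ∃ q, v = some q ∧ q ∉ N.accept}

end CNFA

/-! The game is blindfold, so Intruder's information set after `n + 1` rounds is the set of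
positions reachable along the actions played, namely `Δ(Q₀, a₂…aₙ₊₁)` (the first action
only leads from `q₀` into `Q₀`). A set of states of `𝒜` is not contained in the secrets
exactly when it meets `Q_f`. Universality therefore makes every play opaque; conversely, an
Intruder who blindly spells out a word `w` forces the information set `Δ(Q₀, w)`, which
opacity makes accepting. -/

namespace GameStruct

variable {V A Γ : Type} (G : GameStruct V A Γ)

theorem infoSet_eq_reach (hG : G.Blindfold) (pos : ℕ → V) (acts : ℕ → A) :
    ∀ n, G.infoSet pos acts n = G.reach acts n
  | 0 => rfl
  | n + 1 => by
    ext v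
    rw [infoSet, reach, infoSet_eq_reach hG pos acts n]
    exact and_iff_left (hG _ _)

def IStrat.ofSeq (acts : ℕ → A) (hacts : ∀ n γ, acts n ∈ G.act γ) : G.IStrat where
  -- in round `n` the observation history has length `n + 1`
  f h := acts (h.length - 1)
  valid _ γ := hacts _ γ

noncomputable instance [Inhabited V] : Inhabited G.DStrat where
  default :=
    { g := fun h a => match h with
        | [] => default
        | v :: _ => (G.trans_ne v a).some
      valid := fun _ v a => (G.trans_ne v a).some_mem }

theorem length_hist [Inhabited V] (α : G.IStrat) (β : G.DStrat) (n : ℕ) :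
    (G.hist α β n).length = n + 1 := by
  induction n with
  | zero => rfl
  | succ n ih => simp [hist, ih]

theorem playAct_ofSeq [Inhabited V] (acts : ℕ → A) (hacts : ∀ n γ, acts n ∈ G.act γ)
    (β : G.DStrat) (n : ℕ) : G.playAct (IStrat.ofSeq G acts hacts) β n = acts n := by
  simp [playAct, IStrat.ofSeq, length_hist]

end GameStruct

namespace CNFA

variable {Q A : Type} (N : CNFA Q A)

theorem listStep_append (P : Set Q) (w v : List A) :
    N.listStep P (w ++ v) = N.listStep (N.listStep P w) v := by
  induction w generalizing P with
  | nil => rfl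
  | cons a w ih => exact ih _

theorem not_image_some_subset_secrets_iff (P : Set Q) :
    ¬ some '' P ⊆ N.secrets ↔ (P ∩ N.accept).Nonempty := by
  simp [Set.subset_def, secrets, Set.Nonempty]

variable [Nonempty A] (h0 : N.start.Nonempty)

theorem game_blindfold : (N.game h0).Blindfold := fun _ _ => rfl

theorem game_reach_succ (acts : ℕ → A) (n : ℕ) :
    (N.game h0).reach acts (n + 1) =
      some '' N.listStep N.start ((List.range n).map fun i => acts (i + 1)) := by
  induction n with
  | zero =>
    ext v
    simp [GameStruct.reach, game, listStep]
  | succ n ih =>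
    rw [GameStruct.reach, ih, List.range_succ, List.map_append, listStep_append,
      List.map_singleton, listStep, listStep]
    ext v
    simp only [game, Set.mem_ofPred_eq, Set.mem_image]
    aesop

theorem game_playInfo_succ (α : (N.game h0).IStrat) (β : (N.game h0).DStrat) (n : ℕ) :
    (N.game h0).playInfo α β (n + 1) = some '' N.listStep N.start
      ((List.range n).map fun i => (N.game h0).playAct α β (i + 1)) := by
  rw [GameStruct.playInfo, GameStruct.infoSet_eq_reach _ (N.game_blindfold h0),
    game_reach_succ]

end CNFA

/-- A complete NFA `𝒜` is universal iff every strategy of Defender in the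
associated blindfold game with opacity condition `A_𝒜` is winning. -/
theorem nfa_universal_iff_all_strategies_winning {Q A : Type} [Nonempty A]
    (N : CNFA Q A) (h0 : N.start.Nonempty) :
    (∀ w : List A, (N.listStep N.start w ∩ N.accept).Nonempty) ↔
      ∀ (β : (N.game h0).DStrat) (α : (N.game h0).IStrat),
        (N.game h0).Opaque N.secrets α β := by
  constructor
  · rintro huniv β α (_ | n) hsub
    · obtain ⟨q, hq, -⟩ := hsub (Set.mem_singleton none)
      exact Option.some_ne_none q hq.symm
    · rw [N.game_playInfo_succ] at hsub
      exact (N.not_image_some_subset_secrets_iff _).2 (huniv _) hsub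
  · intro hwin w
    -- the first action only moves `q₀` into `Q₀`, so `w` is spelled from round `1` on
    let α := GameStruct.IStrat.ofSeq (N.game h0)
      (fun n => w.getD (n - 1) (Classical.arbitrary A)) fun _ _ => Set.mem_univ _
    have hword : (List.range w.length).map
        (fun i => (N.game h0).playAct α default (i + 1)) = w := by
      refine List.ext_getElem (by simp) fun i _ hi => ?_
      simp [α, GameStruct.playAct_ofSeq, hi]
    have hop := hwin default α (w.length + 1)
    rwa [N.game_playInfo_succ, hword, N.not_image_some_subset_secrets_iff] at hop
end

section
/- Reduction from reachability imperfect-information games to the opacity-violate problem: given a reachability imperfect-information game A = (V, F, Δ, obs, act, v₀) with target observations F ⊆ Γ, define the game with opacity condition A′ = (V, Δ, obs, act, v₀, S) with S = ⋃_{γ ∈ F} obs⁻¹(γ). Then Intruder has a strategy in A to reach a position whose observation lies in F if and only if Intruder has a winning strategy in A′ (a strategy α such that for all β, α⌢β is not S-opaque). -/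
namespace GameStruct

variable {V A Γ : Type} (G : GameStruct V A Γ) [Inhabited V]

lemma hist_cons (α : G.IStrat) (β : G.DStrat) (n : ℕ) :
    ∃ t, G.hist α β n = G.playPos α β n :: t := by
  induction n with
  | zero => exact ⟨[], rfl⟩
  | succ n ih => exact ⟨G.hist α β n, rfl⟩

lemma playPos_mem_playInfo (α : G.IStrat) (β : G.DStrat) (k : ℕ) :
    G.playPos α β k ∈ G.playInfo α β k := by
  induction k with
  | zero =>
    show G.playPos α β 0 ∈ ({G.init} : Set V)
    simp [playPos, hist]
  | succ k ih =>
    refine ⟨⟨G.playPos α β k, ih, ?_⟩, rfl⟩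
    obtain ⟨t, ht⟩ := G.hist_cons α β k
    show (G.hist α β (k + 1)).headI ∈ _
    rw [show G.hist α β (k+1) = (β.g (G.hist α β k) (G.playAct α β k)) :: G.hist α β k from rfl]
    simp only [List.headI]
    rw [ht]
    exact β.valid t _ _

lemma obs_of_mem_playInfo (α : G.IStrat) (β : G.DStrat) (k : ℕ) (v : V)
    (hv : v ∈ G.playInfo α β k) : G.obs v = G.obs (G.playPos α β k) := by
  cases k with
  | zero =>
    have : v = G.init := hv
    subst this
    simp [playPos, hist]
  | succ k => exact hv.2

end GameStruct

/-- Reduction from reachability imperfect-information games to the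
opacity-violate problem: with secrets `S = ⋃_{γ ∈ F} obs⁻¹(γ)`, Intruder can
force reaching an observation in `F` iff he has a strategy violating
opacity. -/
theorem reachability_iff_opacity_violate {V A Γ : Type} [Inhabited V]
    (G : GameStruct V A Γ) (F : Set Γ) :
    (∃ α : G.IStrat, ∀ β : G.DStrat, ∃ k, G.obs (G.playPos α β k) ∈ F) ↔
      (∃ α : G.IStrat, ∀ β : G.DStrat,
        ¬ G.Opaque {v | G.obs v ∈ F} α β) := by
  constructor
  · rintro ⟨α, hα⟩
    refine ⟨α, fun β hop => ?_⟩
    obtain ⟨k, hk⟩ := hα β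
    exact hop k (fun v hv => by
      show G.obs v ∈ F
      rw [G.obs_of_mem_playInfo α β k v hv]; exact hk)
  · rintro ⟨α, hα⟩
    refine ⟨α, fun β => ?_⟩
    have := hα β
    rw [GameStruct.Opaque] at this
    push_neg at this
    obtain ⟨k, hk⟩ := this
    exact ⟨k, hk (G.playPos_mem_playInfo α β k)⟩
end
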